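/- Let L be the Bannai-Ito operator with rescaled variable: (L_h f)(y) = ((y-ρ₁h)(y-ρ₂h)/(2hy))(f(y)-f(-y)) + ((y-r₁h+h/2)(y-r₂h+h/2)/(h(2y+h)))(f(-y-h)-f(y)), with r₁=a₁/h, r₂=a₂/h, ρ₁=a₁/h+b₁, ρ₂=a₂/h+b₂. Then for every polynomial p and every y ≠ 0, lim_{h→0} (L_h p)(y) = -((y-a₁)(y-a₂)/(2y))·p'(-y) - (F₀(y)/(4y²))(p(y)-p(-y)), where F₀(y) = (2b₁+2b₂+1)y² - 2(a₁b₂+a₂b₁)y - a₁a₂. -/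

import Mathlib

open Filter Polynomial

/-- The rescaled Bannai–Ito operator with parameters r₁ = a₁/h, r₂ = a₂/h,
ρ₁ = a₁/h + b₁, ρ₂ = a₂/h + b₂, applied to a function f at y. -/
noncomputable def biLh (a₁ a₂ b₁ b₂ h : ℝ) (f : ℝ → ℝ) (y : ℝ) : ℝ :=
  ((y - (a₁ / h + b₁) * h) * (y - (a₂ / h + b₂) * h) / (2 * h * y)) * (f y - f (-y))
    + ((y - (a₁ / h) * h + h / 2) * (y - (a₂ / h) * h + h / 2) / (h * (2 * y + h)))
      * (f (-y - h) - f y)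

/-- As h → 0 the rescaled Bannai–Ito operator tends pointwise (on polynomials,
at y ≠ 0) to the first-order Dunkl differential operator
L₀ = ((y-a₁)(y-a₂)/(2y)) ∂_y R - (F₀(y)/(4y²))(I - R), where
F₀(y) = (2b₁+2b₂+1)y² - 2(a₁b₂+a₂b₁)y - a₁a₂ and ∂_y R p (y) = d/dy [p(-y)] = -p'(-y). -/
theorem stmt19 (a₁ a₂ b₁ b₂ : ℝ) (p : Polynomial ℝ) (y : ℝ) (hy : y ≠ 0) :
    Tendsto (fun h : ℝ => biLh a₁ a₂ b₁ b₂ h (fun t => p.eval t) y)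
      (nhdsWithin (0 : ℝ) {0}ᶜ)
      (nhds (((y - a₁) * (y - a₂) / (2 * y)) * (-(p.derivative.eval (-y)))
        - (((2 * b₁ + 2 * b₂ + 1) * y ^ 2 - 2 * (a₁ * b₂ + a₂ * b₁) * y - a₁ * a₂)
            / (4 * y ^ 2)) * (p.eval y - p.eval (-y)))) := by
  set F₀ : ℝ := (2 * b₁ + 2 * b₂ + 1) * y ^ 2 - 2 * (a₁ * b₂ + a₂ * b₁) * y - a₁ * a₂ with hF₀
  set D : ℝ := p.eval y - p.eval (-y) with hDdef
  set P' : ℝ := p.derivative.eval (-y) with hP'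
  -- the difference quotient tends to -p'(-y)
  have hderiv : HasDerivAt (fun h : ℝ => p.eval (-y - h)) (-P') 0 := by
    have h1 : HasDerivAt (fun h : ℝ => -y - h) (-1) 0 := by
      simpa using (hasDerivAt_id (0 : ℝ)).const_sub (-y)
    have h2 : HasDerivAt (fun t : ℝ => p.eval t) P' (-y - 0) := by
      simpa using p.hasDerivAt (-y)
    have := h2.comp 0 h1
    simpa [mul_comm, Function.comp_def] using this
  have hS : Tendsto (fun h : ℝ => (p.eval (-y - h) - p.eval (-y)) / h)
      (nhdsWithin (0 : ℝ) {0}ᶜ) (nhds (-P')) := by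
    have := hasDerivAt_iff_tendsto_slope.mp hderiv
    refine this.congr (fun h => ?_)
    simp [slope_def_field, div_eq_inv_mul]
  -- continuous factors
  have hy2 : (2 : ℝ) * y ≠ 0 := mul_ne_zero two_ne_zero hy
  have h4y : (4 : ℝ) * y ^ 2 ≠ 0 := by positivity
  set M : ℝ → ℝ := fun h =>
    -F₀ + h * (2 * y * b₁ * b₂ - (b₁ * (y - a₂) + b₂ * (y - a₁)) - y / 2) + h ^ 2 * (b₁ * b₂)
    with hM
  set B : ℝ → ℝ := fun h => (y - a₁ + h / 2) * (y - a₂ + h / 2) with hB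
  have hMc : Tendsto (fun h : ℝ => M h * D / (2 * y * (2 * y + h)))
      (nhdsWithin (0 : ℝ) {0}ᶜ) (nhds (-F₀ * D / (4 * y ^ 2))) := by
    have hnum : Tendsto (fun h : ℝ => M h * D) (nhds 0) (nhds (-F₀ * D)) := by
      have : Continuous fun h : ℝ => M h * D := by fun_prop
      have := this.tendsto 0
      simpa [hM] using this
    have hden : Tendsto (fun h : ℝ => 2 * y * (2 * y + h)) (nhds 0) (nhds (4 * y ^ 2)) := by
      have : Continuous fun h : ℝ => 2 * y * (2 * y + h) := by fun_prop
      have := this.tendsto 0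
      convert this using 2
      ring
    exact ((hnum.div hden h4y).mono_left nhdsWithin_le_nhds)
  have hBc : Tendsto (fun h : ℝ => B h / (2 * y + h)) (nhds 0)
      (nhds ((y - a₁) * (y - a₂) / (2 * y))) := by
    have : Continuous fun h : ℝ => B h := by fun_prop
    have hnum := this.tendsto 0
    have hden : Tendsto (fun h : ℝ => 2 * y + h) (nhds 0) (nhds (2 * y)) := by
      have : Continuous fun h : ℝ => 2 * y + h := by fun_prop
      simpa using this.tendsto 0
    have := hnum.div hden hy2
    convert this using 2
    simp [hB]
    rw [hB]; simp
  have hmain : Tendsto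
      (fun h : ℝ => M h * D / (2 * y * (2 * y + h))
        + (B h / (2 * y + h)) * ((p.eval (-y - h) - p.eval (-y)) / h))
      (nhdsWithin (0 : ℝ) {0}ᶜ)
      (nhds (-F₀ * D / (4 * y ^ 2) + ((y - a₁) * (y - a₂) / (2 * y)) * (-P'))) :=
    hMc.add ((hBc.mono_left nhdsWithin_le_nhds).mul hS)
  have hEq : -F₀ * D / (4 * y ^ 2) + ((y - a₁) * (y - a₂) / (2 * y)) * (-P')
      = ((y - a₁) * (y - a₂) / (2 * y)) * (-P') - F₀ / (4 * y ^ 2) * D := by ring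
  rw [hEq] at hmain
  refine hmain.congr' ?_
  -- eventual equality on the punctured neighborhood, also avoiding h = -2y
  have hball : Metric.ball (0 : ℝ) |2 * y| ∈ nhdsWithin (0 : ℝ) {0}ᶜ := by
    apply nhdsWithin_le_nhds
    exact Metric.ball_mem_nhds 0 (by simpa using hy2)
  filter_upwards [hball, self_mem_nhdsWithin] with h hh hne
  have hne' : h ≠ 0 := hne
  have h2yh : 2 * y + h ≠ 0 := by
    intro hc
    have : h = -(2 * y) := by linarith
    rw [this] at hh
    rw [Metric.mem_ball, Real.dist_eq] at hh
    simp at hh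
  simp only [biLh, hM, hB, hF₀, hDdef]
  field_simp
  ring
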